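/- Let 0 < δ < 1 be a fixed constant, let X be large, let r be a positive integer with r ≍ (log X)^δ, and set z_0 = exp((log X)^{1/3}). Suppose g is a multiplicative function with |g(p)| ≪ 1 uniformly for all primes p. Then Σ_{b | P(z_0), ω(b) ≤ r, (b, ℓ) = 1} μ(b) g(b)/b = Π_{p ≤ z_0, p ∤ ℓ} (1 − g(p)/p) + O(exp(−r log log r)), uniformly for all positive integers ℓ. -/

import Mathlib

/-!
Put `f(b) = μ(b) g(b) / b` for `b` coprime to `ℓ` and `f(b) = 0` otherwise. Then `f` is
multiplicative, and since `P(z₀)` is squarefree its divisors correspond to sets `S` of primes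
`p ≤ z₀`: the truncated sum is the part of the expansion `∏_{p ≤ z₀} (1 + f(p)) = ∑_S ∏_{p ∈ S} f(p)`
with `|S| ≤ r`. The remaining part is bounded by Rankin's trick: for `t ≥ 1` it is at most
`t^{-(r+1)} ∏_p (1 + t |f(p)|) ≤ t^{-(r+1)} exp(t E)` with `E = ∑_{p ≤ z₀} C/p`, and `t = (r+1)/A`
for any `A ≥ E` gives `(e A/(r+1))^{r+1}`. A dyadic Chebyshev argument gives `E ≪ log log X`, so
`A` can be taken with `e A log r ≪ (log log X)^2 = o(r)`, and the error is at most `(log r)^{-r}`.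
-/

/-- `P(y)`: the product of all primes `p ≤ y`. -/
noncomputable def Pprod (y : ℝ) : ℕ := ∏ p ∈ (Finset.Iic ⌊y⌋₊).filter Nat.Prime, p

open Finset Real Filter Asymptotics

namespace Nat

theorem sum_divisors_eq_sum_powerset_primeFactors {M : Type*} [AddCommMonoid M] {n : ℕ}
    (hn : Squarefree n) (F : ℕ → M) :
    ∑ d ∈ n.divisors, F d = ∑ S ∈ n.primeFactors.powerset, F (∏ p ∈ S, p) := by
  have hprime {S : Finset ℕ} (hS : S ∈ n.primeFactors.powerset) : ∀ p ∈ S, p.Prime :=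
    fun p hp => prime_of_mem_primeFactors (mem_powerset.1 hS hp)
  symm
  refine sum_nbij' (fun S => ∏ p ∈ S, p) primeFactors (fun S hS => ?_) (fun d hd => ?_)
    (fun S hS => primeFactors_prod (hprime hS))
    (fun d hd => prod_primeFactors_of_squarefree (hn.squarefree_of_dvd (dvd_of_mem_divisors hd)))
    (fun _ _ => rfl)
  · refine mem_divisors.2 ⟨?_, hn.ne_zero⟩
    exact (prod_dvd_prod_of_subset _ _ _ (mem_powerset.1 hS)).trans
      (dvd_of_eq (prod_primeFactors_of_squarefree hn))
  · exact mem_powerset.2 (primeFactors_mono (dvd_of_mem_divisors hd) hn.ne_zero)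

end Nat

section Truncation

variable {R : Type*} [CommRing R] {f : ArithmeticFunction R} {n : ℕ}

theorem ArithmeticFunction.IsMultiplicative.sum_divisors_filter_card_primeFactors_le
    (hf : f.IsMultiplicative) (hn : Squarefree n) (r : ℕ) :
    ∑ d ∈ n.divisors with #d.primeFactors ≤ r, f d =
      ∑ S ∈ n.primeFactors.powerset with #S ≤ r, ∏ p ∈ S, f p := by
  rw [sum_filter, sum_filter, Nat.sum_divisors_eq_sum_powerset_primeFactors hn]
  refine sum_congr rfl fun S hS => ?_
  have hSn := mem_powerset.1 hS
  rw [Nat.primeFactors_prod fun p hp => Nat.prime_of_mem_primeFactors (hSn hp),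
    hf.map_prod_of_subset_primeFactors n S hSn]

theorem ArithmeticFunction.IsMultiplicative.prod_one_add_sub_sum_divisors_filter
    (hf : f.IsMultiplicative) (hn : Squarefree n) (r : ℕ) :
    ∏ p ∈ n.primeFactors, (1 + f p) - ∑ d ∈ n.divisors with #d.primeFactors ≤ r, f d =
      ∑ S ∈ n.primeFactors.powerset with r < #S, ∏ p ∈ S, f p := by
  rw [prod_one_add, hf.sum_divisors_filter_card_primeFactors_le hn,
    ← sum_filter_add_sum_filter_not _ (fun S => #S ≤ r)]
  simp only [not_le, add_sub_cancel_left]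

end Truncation

theorem Finset.sum_powerset_filter_card_gt_prod_le {ι : Type*} (s : Finset ι) {f : ι → ℝ}
    (hf : ∀ i, 0 ≤ f i) (r : ℕ) {t : ℝ} (ht : 1 ≤ t) :
    ∑ S ∈ s.powerset with r < #S, ∏ i ∈ S, f i ≤ exp (t * ∑ i ∈ s, f i) / t ^ (r + 1) := by
  have ht0 : 0 < t := zero_lt_one.trans_le ht
  calc ∑ S ∈ s.powerset with r < #S, ∏ i ∈ S, f i
      ≤ ∑ S ∈ s.powerset with r < #S, (∏ i ∈ S, t * f i) / t ^ (r + 1) := by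
        refine sum_le_sum fun S hS => ?_
        rw [prod_mul_distrib, prod_const, mul_div_right_comm]
        refine le_mul_of_one_le_left (prod_nonneg fun i _ => hf i) ?_
        rw [one_le_div (by positivity)]
        exact pow_le_pow_right₀ ht (mem_filter.1 hS).2
    _ ≤ ∑ S ∈ s.powerset, (∏ i ∈ S, t * f i) / t ^ (r + 1) :=
        sum_le_sum_of_subset_of_nonneg (filter_subset _ _) fun S _ _ =>
          div_nonneg (prod_nonneg fun i _ => mul_nonneg ht0.le (hf i)) (by positivity)
    _ = (∏ i ∈ s, (1 + t * f i)) / t ^ (r + 1) := by rw [← sum_div, prod_one_add]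
    _ ≤ exp (t * ∑ i ∈ s, f i) / t ^ (r + 1) := by
        rw [mul_sum]
        gcongr
        exact prod_one_add_le_exp_sum s fun i => mul_nonneg ht0.le (hf i)

section Rankin

variable {f : ArithmeticFunction ℝ} {n : ℕ}

theorem ArithmeticFunction.IsMultiplicative.abs_sum_divisors_filter_sub_prod_le
    (hf : f.IsMultiplicative) (hn : Squarefree n) {a : ℕ → ℝ} (ha : ∀ p, 0 ≤ a p)
    (hfa : ∀ p ∈ n.primeFactors, |f p| ≤ a p) (r : ℕ) {t : ℝ} (ht : 1 ≤ t) :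
    |∑ d ∈ n.divisors with #d.primeFactors ≤ r, f d - ∏ p ∈ n.primeFactors, (1 + f p)| ≤
      exp (t * ∑ p ∈ n.primeFactors, a p) / t ^ (r + 1) := by
  rw [abs_sub_comm, hf.prod_one_add_sub_sum_divisors_filter hn]
  calc |∑ S ∈ n.primeFactors.powerset with r < #S, ∏ p ∈ S, f p|
      ≤ ∑ S ∈ n.primeFactors.powerset with r < #S, ∏ p ∈ S, a p := by
        refine (abs_sum_le_sum_abs _ _).trans (sum_le_sum fun S hS => ?_)
        rw [abs_prod]
        exact prod_le_prod (fun p _ => abs_nonneg _)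
          fun p hp => hfa p (mem_powerset.1 (mem_filter.1 hS).1 hp)
    _ ≤ _ := sum_powerset_filter_card_gt_prod_le _ ha r ht

/-- Rankin's trick with the choice `t = (r + 1) / A`. -/
theorem ArithmeticFunction.IsMultiplicative.abs_sum_divisors_filter_sub_prod_le_inv_pow
    (hf : f.IsMultiplicative) (hn : Squarefree n) {a : ℕ → ℝ} (ha : ∀ p, 0 ≤ a p)
    (hfa : ∀ p ∈ n.primeFactors, |f p| ≤ a p) {r : ℕ} {A K : ℝ}
    (hA : ∑ p ∈ n.primeFactors, a p ≤ A) (hA0 : 0 < A) (hK : 1 ≤ K)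
    (hAK : exp 1 * A * K ≤ r + 1) :
    |∑ d ∈ n.divisors with #d.primeFactors ≤ r, f d - ∏ p ∈ n.primeFactors, (1 + f p)| ≤
      K⁻¹ ^ (r + 1) := by
  set t : ℝ := (r + 1) / A with ht_def
  have hr : (0 : ℝ) < r + 1 := by positivity
  have ht : 1 ≤ t := by
    have : 1 ≤ exp 1 * K := one_le_mul_of_one_le_of_one_le (one_le_exp zero_le_one) hK
    rw [ht_def, one_le_div hA0]
    nlinarith
  have htA : t * A = ((r + 1 : ℕ) : ℝ) * 1 := by
    rw [ht_def, div_mul_cancel₀ _ hA0.ne']; push_cast; ring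
  calc _ ≤ exp (t * ∑ p ∈ n.primeFactors, a p) / t ^ (r + 1) :=
        hf.abs_sum_divisors_filter_sub_prod_le hn ha hfa r ht
    _ ≤ exp (t * A) / t ^ (r + 1) := by gcongr
    _ = (exp 1 * A / (r + 1)) ^ (r + 1) := by
        rw [htA, exp_nat_mul, ← div_pow, ht_def, div_div_eq_mul_div]
    _ ≤ K⁻¹ ^ (r + 1) := by
        gcongr
        rw [div_le_iff₀ hr, ← div_eq_inv_mul, le_div_iff₀ (by positivity)]
        exact hAK

end Rankin

namespace Nat

open Chebyshev

theorem sum_primesLE_filter_log_two_eq_inv_le (n : ℕ) {j : ℕ} (hj : j ≠ 0) :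
    ∑ p ∈ primesLE n with Nat.log 2 p = j, (p : ℝ)⁻¹ ≤ 4 / j := by
  have hlog2 : 0 < Real.log 2 := Real.log_pos one_lt_two
  have hj0 : (0 : ℝ) < j := by positivity
  set F := {p ∈ primesLE n | Nat.log 2 p = j}
  have hmem {p : ℕ} (hp : p ∈ F) :
      p.Prime ∧ 2 ^ j ≤ p ∧ p < 2 ^ (j + 1) := by
    obtain ⟨hp, hpj⟩ := mem_filter.1 hp
    have hp := prime_of_mem_primesLE hp
    exact ⟨hp, hpj ▸ pow_log_le_self 2 hp.ne_zero, hpj ▸ lt_pow_succ_log_self one_lt_two p⟩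
  -- `log p ≥ j log 2` turns the block into a part of `θ(2^(j+1))`
  have hterm {p : ℕ} (hp : p ∈ F) :
      (p : ℝ)⁻¹ ≤ Real.log p / (j * Real.log 2 * 2 ^ j) := by
    obtain ⟨-, hlo, -⟩ := hmem hp
    have hlo : (2 : ℝ) ^ j ≤ p := by exact_mod_cast hlo
    have hlog : j * Real.log 2 ≤ Real.log p := by
      rw [← Real.log_pow]; exact Real.log_le_log (by positivity) hlo
    rw [inv_eq_one_div, div_le_div_iff₀ ((pow_pos two_pos j).trans_le hlo) (by positivity),
      one_mul]
    exact mul_le_mul hlog hlo (by positivity) ((mul_nonneg hj0.le hlog2.le).trans hlog)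
  have htheta : ∑ p ∈ F, Real.log p ≤ θ (2 ^ (j + 1)) := by
    rw [show ((2 : ℝ) ^ (j + 1)) = ((2 ^ (j + 1) : ℕ) : ℝ) by push_cast; rfl,
      theta_eq_sum_primesLE_log]
    refine sum_le_sum_of_subset_of_nonneg (fun p hp => ?_) fun p hp _ =>
      Real.log_natCast_nonneg p
    obtain ⟨hp, -, hhi⟩ := hmem hp
    exact mem_primesLE.2 ⟨hhi.le, hp⟩
  calc ∑ p ∈ F, (p : ℝ)⁻¹ ≤ ∑ p ∈ F, Real.log p / (j * Real.log 2 * 2 ^ j) :=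
        sum_le_sum fun p hp => hterm hp
    _ ≤ Real.log 4 * 2 ^ (j + 1) / (j * Real.log 2 * 2 ^ j) := by
        rw [← sum_div]
        gcongr
        exact htheta.trans (theta_le_log4_mul_x (by positivity))
    _ = 4 / j := by
        rw [show (4 : ℝ) = 2 ^ 2 by norm_num, Real.log_pow]
        field_simp
        ring

theorem sum_primesLE_inv_le_harmonic (n : ℕ) :
    ∑ p ∈ primesLE n, (p : ℝ)⁻¹ ≤ 4 * harmonic (Nat.log 2 n) := by
  have hmaps : ∀ p ∈ primesLE n, Nat.log 2 p ∈ Icc 1 (Nat.log 2 n) := fun p hp => by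
    obtain ⟨hpn, hp⟩ := mem_primesLE.1 hp
    exact mem_Icc.2 ⟨Nat.log_pos one_lt_two hp.two_le, Nat.log_mono_right hpn⟩
  rw [← sum_fiberwise_of_maps_to hmaps, harmonic_eq_sum_Icc]
  push_cast
  rw [mul_sum]
  refine sum_le_sum fun j hj => ?_
  rw [← div_eq_mul_inv]
  exact sum_primesLE_filter_log_two_eq_inv_le n (by have := (mem_Icc.1 hj).1; omega)

end Nat

theorem sum_primesLE_floor_inv_le {z : ℝ} (hz : 2 ≤ z) :
    ∑ p ∈ Nat.primesLE ⌊z⌋₊, (p : ℝ)⁻¹ ≤ 4 * (2 + log (log z)) := by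
  have hlog2 : 0 < log 2 := Real.log_pos one_lt_two
  have hz2 : 2 ≤ ⌊z⌋₊ := Nat.le_floor (by exact_mod_cast hz)
  set m := Nat.log 2 ⌊z⌋₊
  have hm : (1 : ℝ) ≤ m := by exact_mod_cast Nat.log_pos one_lt_two hz2
  have hmz : m * log 2 ≤ log z := by
    have h2m : 2 ^ m ≤ ⌊z⌋₊ := Nat.pow_log_le_self 2 (by omega)
    have : (2 : ℝ) ^ m ≤ z :=
      calc (2 : ℝ) ^ m ≤ ⌊z⌋₊ := by exact_mod_cast h2m
        _ ≤ z := Nat.floor_le (by linarith)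
    rw [← Real.log_pow]
    exact Real.log_le_log (by positivity) this
  have hlogm : log m ≤ log (log z) + 1 := by
    have : log m ≤ log (log z) - log (log 2) := by
      rw [← Real.log_div (Real.log_pos (by linarith)).ne' hlog2.ne']
      exact Real.log_le_log (by linarith) ((le_div_iff₀ hlog2).2 hmz)
    have : -1 < log (log 2) := by
      rw [Real.lt_log_iff_exp_lt hlog2]
      linarith [exp_neg_one_lt_half, log_two_gt_d9]
    linarith
  calc ∑ p ∈ Nat.primesLE ⌊z⌋₊, (p : ℝ)⁻¹ ≤ 4 * harmonic m :=
        Nat.sum_primesLE_inv_le_harmonic _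
    _ ≤ 4 * (1 + log m) := by
        gcongr
        exact_mod_cast harmonic_le_one_add_log m
    _ ≤ 4 * (2 + log (log z)) := by linarith

theorem sum_primesLE_floor_exp_rpow_inv_le {L : ℝ} (hL : 1 ≤ L) :
    ∑ p ∈ Nat.primesLE ⌊exp (L ^ ((1 : ℝ) / 3))⌋₊, (p : ℝ)⁻¹ ≤ 4 * (2 + 1 / 3 * log L) := by
  have hz : 2 ≤ exp (L ^ ((1 : ℝ) / 3)) := by
    linarith [add_one_le_exp (L ^ ((1 : ℝ) / 3)), one_le_rpow hL (by norm_num : (0 : ℝ) ≤ 1 / 3)]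
  have := sum_primesLE_floor_inv_le hz
  rwa [log_exp, log_rpow (by linarith)] at this

theorem inv_log_pow_succ_le_exp_neg_mul_log_log {r : ℕ} (hr : 1 ≤ log r) :
    (log r)⁻¹ ^ (r + 1) ≤ exp (-r * log (log r)) :=
  calc (log r)⁻¹ ^ (r + 1) ≤ (log r)⁻¹ ^ r :=
        pow_le_pow_of_le_one (by positivity) (inv_le_one_of_one_le₀ hr) r.le_succ
    _ = exp (-r * log (log r)) := by
        rw [← exp_log (inv_pos.2 (zero_lt_one.trans_le hr)), ← exp_nat_mul, log_inv]
        ring_nf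

theorem Pprod_eq_primorial (y : ℝ) : Pprod y = primorial ⌊y⌋₊ := by
  rw [Pprod, primorial_eq_prod_primesLE]
  congr 1
  ext p
  simp [Nat.mem_primesLE]

noncomputable def coprimeMoebiusWeight (g : ℕ → ℝ) (ℓ : ℕ) : ArithmeticFunction ℝ :=
  ⟨fun b => if b.Coprime ℓ then (ArithmeticFunction.moebius b : ℝ) * g b / b else 0, by simp⟩

section CoprimeMoebiusWeight

variable {g : ℕ → ℝ} {ℓ : ℕ}

theorem coprimeMoebiusWeight_apply (b : ℕ) :
    coprimeMoebiusWeight g ℓ b =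
      if b.Coprime ℓ then (ArithmeticFunction.moebius b : ℝ) * g b / b else 0 := rfl

theorem isMultiplicative_coprimeMoebiusWeight (hg1 : g 1 = 1)
    (hg : ∀ m n : ℕ, Nat.Coprime m n → g (m * n) = g m * g n) :
    (coprimeMoebiusWeight g ℓ).IsMultiplicative := by
  refine ⟨by simp [coprimeMoebiusWeight_apply, hg1], fun {m n} hmn => ?_⟩
  simp only [coprimeMoebiusWeight_apply, Nat.coprime_mul_iff_left,
    ArithmeticFunction.isMultiplicative_moebius.map_mul_of_coprime hmn, hg m n hmn]
  by_cases hm : m.Coprime ℓ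
  · by_cases hn : n.Coprime ℓ
    · rw [if_pos ⟨hm, hn⟩, if_pos hm, if_pos hn]
      push_cast
      ring
    · simp [hn]
  · simp [hm]

theorem coprimeMoebiusWeight_apply_prime {p : ℕ} (hp : p.Prime) :
    coprimeMoebiusWeight g ℓ p = if p ∣ ℓ then 0 else -(g p / p) := by
  simp only [coprimeMoebiusWeight_apply, hp.coprime_iff_not_dvd,
    ArithmeticFunction.moebius_apply_prime hp]
  split_ifs <;> push_cast <;> ring

theorem abs_coprimeMoebiusWeight_apply_prime_le {C : ℝ} (hC : 0 ≤ C)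
    (hgC : ∀ p : ℕ, p.Prime → |g p| ≤ C) {p : ℕ} (hp : p.Prime) :
    |coprimeMoebiusWeight g ℓ p| ≤ C / p := by
  rw [coprimeMoebiusWeight_apply_prime hp]
  split_ifs
  · simp only [abs_zero]; positivity
  · rw [abs_neg, abs_div, Nat.abs_cast]
    gcongr
    exact hgC p hp

theorem prod_primesLE_one_add_coprimeMoebiusWeight (N : ℕ) :
    ∏ p ∈ Nat.primesLE N, (1 + coprimeMoebiusWeight g ℓ p) =
      ∏ p ∈ (Iic N).filter (fun p => p.Prime ∧ ¬p ∣ ℓ), (1 - g p / p) := by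
  have : (Iic N).filter (fun p => p.Prime ∧ ¬p ∣ ℓ) = (Nat.primesLE N).filter (¬· ∣ ℓ) := by
    ext p
    simp [Nat.mem_primesLE, and_assoc]
  rw [this, prod_filter]
  refine prod_congr rfl fun p hp => ?_
  rw [coprimeMoebiusWeight_apply_prime (Nat.prime_of_mem_primesLE hp)]
  split_ifs <;> ring

end CoprimeMoebiusWeight

theorem sum_divisors_Pprod_eq_sum_coprimeMoebiusWeight (y : ℝ) (r : ℕ) (g : ℕ → ℝ) (ℓ : ℕ) :
    ∑ b ∈ (Pprod y).divisors.filter (fun b => b.primeFactors.card ≤ r ∧ Nat.gcd b ℓ = 1),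
        (ArithmeticFunction.moebius b : ℝ) * g b / b =
      ∑ d ∈ (primorial ⌊y⌋₊).divisors with #d.primeFactors ≤ r, coprimeMoebiusWeight g ℓ d := by
  rw [Pprod_eq_primorial, sum_filter, sum_filter]
  simp only [ite_and, coprimeMoebiusWeight_apply, Nat.Coprime]

theorem isLittleO_const_add_mul_log_rpow (a b : ℝ) {s : ℝ} (hs : 0 < s) :
    (fun x => a + b * log x) =o[atTop] fun x => x ^ s :=
  (isLittleO_const_log_atTop.isBigO.add ((isBigO_refl log atTop).const_mul_left b))
    |>.trans_isLittleO (isLittleO_log_rpow_atTop hs)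

theorem eventually_affine_log_mul_affine_log_le_rpow (a b c d : ℝ) {δ k : ℝ} (hδ : 0 < δ)
    (hk : 0 < k) :
    ∀ᶠ x in atTop, (a + b * log x) * (c + d * log x) ≤ k * x ^ δ := by
  have h := (isLittleO_const_add_mul_log_rpow a b (half_pos hδ)).mul
    (isLittleO_const_add_mul_log_rpow c d (half_pos hδ))
  filter_upwards [h.bound hk, eventually_gt_atTop 0] with x hx hx0
  rw [← rpow_add hx0, add_halves, Real.norm_eq_abs, Real.norm_eq_abs,
    abs_of_pos (rpow_pos_of_pos hx0 δ)] at hx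
  exact (le_abs_self _).trans hx

theorem abs_sum_coprimeMoebiusWeight_sub_prod_le (N r ℓ : ℕ) {g : ℕ → ℝ} (hg1 : g 1 = 1)
    (hg : ∀ m n : ℕ, Nat.Coprime m n → g (m * n) = g m * g n) {C : ℝ} (hC : 0 ≤ C)
    (hgC : ∀ p : ℕ, p.Prime → |g p| ≤ C) {A K : ℝ}
    (hA : C * ∑ p ∈ Nat.primesLE N, (p : ℝ)⁻¹ ≤ A) (hA0 : 0 < A) (hK : 1 ≤ K)
    (hAK : exp 1 * A * K ≤ r + 1) :
    |∑ d ∈ (primorial N).divisors with #d.primeFactors ≤ r, coprimeMoebiusWeight g ℓ d -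
        ∏ p ∈ (Iic N).filter (fun p => p.Prime ∧ ¬p ∣ ℓ), (1 - g p / p)| ≤ K⁻¹ ^ (r + 1) := by
  rw [← prod_primesLE_one_add_coprimeMoebiusWeight, ← primeFactors_primorial]
  refine (isMultiplicative_coprimeMoebiusWeight hg1 hg).abs_sum_divisors_filter_sub_prod_le_inv_pow
    (squarefree_primorial N) (a := fun p => C / p) (fun p => by positivity)
    (fun p hp => abs_coprimeMoebiusWeight_apply_prime_le hC hgC (Nat.prime_of_mem_primeFactors hp))
    ?_ hA0 hK hAK
  simpa only [primeFactors_primorial, div_eq_mul_inv, mul_sum] using hA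

theorem statement6_general (δ : ℝ) (hδ0 : 0 < δ)
    (Cg c₁ c₂ : ℝ) (hCg : 0 < Cg) (hc₁ : 0 < c₁) (hc₂ : 0 < c₂) :
    ∃ C : ℝ, 0 < C ∧ ∃ X₀ : ℝ, ∀ X : ℝ, X₀ ≤ X → ∀ r : ℕ,
      c₁ * Real.log X ^ δ ≤ (r : ℝ) → (r : ℝ) ≤ c₂ * Real.log X ^ δ →
      ∀ g : ℕ → ℝ, g 1 = 1 → (∀ m n : ℕ, Nat.Coprime m n → g (m * n) = g m * g n) →
      (∀ p : ℕ, p.Prime → |g p| ≤ Cg) →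
      ∀ ℓ : ℕ, 0 < ℓ →
      |(∑ b ∈ (Pprod (Real.exp (Real.log X ^ ((1 : ℝ) / 3)))).divisors.filter
            (fun b => b.primeFactors.card ≤ r ∧ Nat.gcd b ℓ = 1),
          (ArithmeticFunction.moebius b : ℝ) * g b / b) -
        ∏ p ∈ (Finset.Iic ⌊Real.exp (Real.log X ^ ((1 : ℝ) / 3))⌋₊).filter
            (fun p => p.Prime ∧ ¬p ∣ ℓ), (1 - g p / p)| ≤
        C * Real.exp (-(r : ℝ) * Real.log (Real.log r)) := by
  have hev : ∀ᶠ L in atTop, 1 ≤ L ∧ 3 ≤ c₁ * L ^ δ ∧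
      (2 + 1 / 3 * log L) * (log c₂ + δ * log L) ≤ c₁ / (4 * Cg * exp 1) * L ^ δ :=
    (eventually_ge_atTop 1).and <|
      (((tendsto_rpow_atTop hδ0).const_mul_atTop hc₁).eventually_ge_atTop 3).and <|
        eventually_affine_log_mul_affine_log_le_rpow _ _ _ _ hδ0 (by positivity)
  obtain ⟨X₀, hX₀⟩ := eventually_atTop.1 (tendsto_log_atTop.eventually hev)
  refine ⟨1, one_pos, X₀, fun X hX r hr₁ hr₂ g hg1 hg hgC ℓ _ => ?_⟩
  obtain ⟨hL, hr3, hkey⟩ := hX₀ X hX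
  set L := log X
  have hr : (3 : ℝ) ≤ r := hr3.trans hr₁
  have hlogr : 1 ≤ log r := by
    rw [le_log_iff_exp_le (by linarith)]; linarith [exp_one_lt_d9]
  have hlogr' : log r ≤ log c₂ + δ * log L := by
    rw [← log_rpow (by linarith), ← log_mul hc₂.ne' (by positivity)]
    exact log_le_log (by linarith) hr₂
  set A := 4 * Cg * (2 + 1 / 3 * log L)
  have hA0 : 0 < A := by have := log_nonneg hL; positivity
  have hE : Cg * ∑ p ∈ Nat.primesLE ⌊exp (L ^ ((1 : ℝ) / 3))⌋₊, (p : ℝ)⁻¹ ≤ A :=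
    (mul_le_mul_of_nonneg_left (sum_primesLE_floor_exp_rpow_inv_le hL) hCg.le).trans_eq
      (by ring)
  have hAK : exp 1 * A * log r ≤ r + 1 :=
    calc exp 1 * A * log r ≤ exp 1 * A * (log c₂ + δ * log L) := by gcongr
      _ = 4 * Cg * exp 1 * ((2 + 1 / 3 * log L) * (log c₂ + δ * log L)) := by ring
      _ ≤ 4 * Cg * exp 1 * (c₁ / (4 * Cg * exp 1) * L ^ δ) := by gcongr
      _ = c₁ * L ^ δ := by field_simp
      _ ≤ r + 1 := by linarith
  rw [one_mul, sum_divisors_Pprod_eq_sum_coprimeMoebiusWeight]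
  exact (abs_sum_coprimeMoebiusWeight_sub_prod_le _ r ℓ hg1 hg hCg.le hgC hE hA0 hlogr hAK).trans
    (inv_log_pow_succ_le_exp_neg_mul_log_log hlogr)

/-- The fundamental lemma of sieve theory used in the paper: for fixed `0 < δ < 1`,
`r ≍ (log X)^δ`, `z₀ = exp((log X)^{1/3})`, and a multiplicative `g` with `|g(p)| ≪ 1`,
`∑_{b | P(z₀), ω(b) ≤ r, (b,ℓ)=1} μ(b) g(b)/b
  = ∏_{p ≤ z₀, p ∤ ℓ} (1 - g(p)/p) + O(exp(-r log log r))`,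
uniformly in the positive integer `ℓ`. -/
theorem statement6 (δ : ℝ) (hδ0 : 0 < δ) (hδ1 : δ < 1)
    (Cg c₁ c₂ : ℝ) (hCg : 0 < Cg) (hc₁ : 0 < c₁) (hc₂ : 0 < c₂) :
    ∃ C : ℝ, 0 < C ∧ ∃ X₀ : ℝ, ∀ X : ℝ, X₀ ≤ X → ∀ r : ℕ,
      c₁ * Real.log X ^ δ ≤ (r : ℝ) → (r : ℝ) ≤ c₂ * Real.log X ^ δ →
      ∀ g : ℕ → ℝ, g 1 = 1 → (∀ m n : ℕ, Nat.Coprime m n → g (m * n) = g m * g n) →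
      (∀ p : ℕ, p.Prime → |g p| ≤ Cg) →
      ∀ ℓ : ℕ, 0 < ℓ →
      |(∑ b ∈ (Pprod (Real.exp (Real.log X ^ ((1 : ℝ) / 3)))).divisors.filter
            (fun b => b.primeFactors.card ≤ r ∧ Nat.gcd b ℓ = 1),
          (ArithmeticFunction.moebius b : ℝ) * g b / b) -
        ∏ p ∈ (Finset.Iic ⌊Real.exp (Real.log X ^ ((1 : ℝ) / 3))⌋₊).filter
            (fun p => p.Prime ∧ ¬p ∣ ℓ), (1 - g p / p)| ≤
        C * Real.exp (-(r : ℝ) * Real.log (Real.log r)) :=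
  statement6_general δ hδ0 Cg c₁ c₂ hCg hc₁ hc₂
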